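/- Let X be an ergodic Banach space, let π be an action of ℍ on X by linear isometric automorphisms, and let f : ℍ → X be a Lipschitz 1-cocycle for π. Let P : X → X be the projection onto the π(c)-invariant vectors defined by Px := lim_{N→∞} (1/N) ∑_{n=0}^{N−1} π(c)^n x (the limit exists by ergodicity), where c = aba⁻¹b⁻¹. Then Pf(c) = 0. -/

import Mathlib

open scoped BigOperators

/-- The discrete Heisenberg group `ℍ`, realized via the coordinates of the
3×3 upper-triangular integer matrices `[[1, x, z], [0, 1, y], [0, 0, 1]]`
with unit diagonal. -/
@[ext] structure Heis where
  x : ℤ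
  y : ℤ
  z : ℤ

namespace Heis

instance : One Heis := ⟨⟨0, 0, 0⟩⟩
instance : Mul Heis := ⟨fun g h => ⟨g.x + h.x, g.y + h.y, g.z + h.z + g.x * h.y⟩⟩
instance : Inv Heis := ⟨fun g => ⟨-g.x, -g.y, -g.z + g.x * g.y⟩⟩

@[simp] lemma mul_def (g h : Heis) :
    g * h = ⟨g.x + h.x, g.y + h.y, g.z + h.z + g.x * h.y⟩ := rfl
@[simp] lemma one_def : (1 : Heis) = ⟨0, 0, 0⟩ := rfl
@[simp] lemma inv_def (g : Heis) : g⁻¹ = ⟨-g.x, -g.y, -g.z + g.x * g.y⟩ := rfl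

instance : Group Heis where
  mul_assoc g h k := by ext <;> simp <;> ring
  one_mul g := by ext <;> simp
  mul_one g := by ext <;> simp
  inv_mul_cancel g := by ext <;> simp <;> ring

/-- The generator `a`. -/
def A : Heis := ⟨1, 0, 0⟩
/-- The generator `b`. -/
def B : Heis := ⟨0, 1, 0⟩
/-- The commutator `c = a * b * a⁻¹ * b⁻¹`, a central element. -/
def C : Heis := A * B * A⁻¹ * B⁻¹
/-- The symmetric generating set `S = {a, b, a⁻¹, b⁻¹}`. -/
def S : Set Heis := {A, B, A⁻¹, B⁻¹}

/-- The word length of `g` with respect to the generating set `S`. -/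
noncomputable def wordLength (g : Heis) : ℕ :=
  sInf {n : ℕ | ∃ l : List Heis, l.length = n ∧ (∀ s ∈ l, s ∈ S) ∧ l.prod = g}

/-- The left-invariant word metric `d_W` on `ℍ` associated to `S`. -/
noncomputable def dW (g h : Heis) : ℕ := wordLength (g⁻¹ * h)

end Heis

/-- A Banach space `X` is ergodic if for every linear isometry `T : X → X` and every
`x ∈ X` the sequence of ergodic averages `(1/n)·∑_{j=0}^{n−1} T^j x` converges in norm. -/
def IsErgodicSpace (X : Type*) [NormedAddCommGroup X] [NormedSpace ℝ X] : Prop :=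
  ∀ T : X →ₗᵢ[ℝ] X, ∀ v : X, ∃ w : X,
    Filter.Tendsto (fun n : ℕ => (n : ℝ)⁻¹ • ∑ j ∈ Finset.range n, (⇑T)^[j] v)
      Filter.atTop (nhds w)

/-!
The cocycle identity gives `f(cⁿ) = ∑_{k<n} π(c)ᵏ f(c)`, so `P f(c)` is the
limit of `f(cᴺ) / N`. Along `N = m²` this tends to `0`: `c^{m²} = [aᵐ, bᵐ]` has word length at
most `4m`, and `f` is Lipschitz with `f(1) = 0`, so `‖f(c^{m²})‖ = O(m)`.
-/

open Filter Topology

section Cocycle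

variable {G X : Type*} [Monoid G] [SeminormedAddCommGroup X] [NormedSpace ℝ X]

def IsCocycle (π : G →* (X ≃ₗᵢ[ℝ] X)) (f : G → X) : Prop :=
  ∀ g h : G, f (g * h) = π g (f h) + f g

namespace IsCocycle

variable {π : G →* (X ≃ₗᵢ[ℝ] X)} {f : G → X}

theorem map_one (hf : IsCocycle π f) : f 1 = 0 := by
  have h := hf 1 1
  rw [one_mul, _root_.map_one, LinearIsometryEquiv.coe_one, id_eq] at h
  exact left_eq_add.mp h

theorem map_pow (hf : IsCocycle π f) (g : G) (n : ℕ) :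
    f (g ^ n) = ∑ k ∈ Finset.range n, (π g ^ k) (f g) := by
  induction n with
  | zero => rw [pow_zero, hf.map_one, Finset.sum_range_zero]
  | succ n ih => rw [pow_succ, hf, ih, Finset.sum_range_succ, _root_.map_pow, add_comm]

end IsCocycle

end Cocycle

theorem eq_zero_of_tendsto_average_of_norm_sq_le {E : Type*} [NormedAddCommGroup E]
    [NormedSpace ℝ E] {s : ℕ → E} {p : E} {K : ℝ}
    (hs : Tendsto (fun N : ℕ => (N : ℝ)⁻¹ • s N) atTop (𝓝 p))
    (hK : ∀ m : ℕ, ‖s (m ^ 2)‖ ≤ K * m) : p = 0 := by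
  have h_sq : Tendsto (fun m : ℕ => ((m ^ 2 : ℕ) : ℝ)⁻¹ • s (m ^ 2)) atTop (𝓝 p) :=
    hs.comp (tendsto_pow_atTop two_ne_zero)
  have h_zero : Tendsto (fun m : ℕ => ((m ^ 2 : ℕ) : ℝ)⁻¹ • s (m ^ 2)) atTop (𝓝 0) := by
    refine squeeze_zero_norm (fun m => ?_) (tendsto_const_div_atTop_nhds_zero_nat K)
    rcases Nat.eq_zero_or_pos m with rfl | hm
    · simp
    have hm : (0 : ℝ) < m := Nat.cast_pos.mpr hm
    rw [norm_smul, norm_inv, Nat.cast_pow, Real.norm_of_nonneg (by positivity), inv_mul_le_iff₀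
      (by positivity)]
    calc ‖s (m ^ 2)‖ ≤ K * m := hK m
      _ = (m : ℝ) ^ 2 * (K / m) := by field_simp
  exact tendsto_nhds_unique h_sq h_zero

namespace Heis

lemma A_pow (m : ℕ) : A ^ m = ⟨m, 0, 0⟩ := by
  induction m with
  | zero => rfl
  | succ n ih => rw [pow_succ, ih]; ext <;> simp [A]

lemma B_pow (m : ℕ) : B ^ m = ⟨0, m, 0⟩ := by
  induction m with
  | zero => rfl
  | succ n ih => rw [pow_succ, ih]; ext <;> simp [B]

lemma C_pow (m : ℕ) : C ^ m = ⟨0, 0, m⟩ := by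
  induction m with
  | zero => rfl
  | succ n ih => rw [pow_succ, ih]; ext <;> simp [C, A, B]

lemma commutator_A_pow_B_pow_eq_C_pow_sq (m : ℕ) :
    A ^ m * B ^ m * (A ^ m)⁻¹ * (B ^ m)⁻¹ = C ^ (m ^ 2) := by
  rw [A_pow, B_pow, C_pow]
  ext <;> simp; ring

lemma wordLength_list_prod_le {l : List Heis} (hl : ∀ s ∈ l, s ∈ S) :
    wordLength l.prod ≤ l.length :=
  Nat.sInf_le ⟨l, rfl, hl, rfl⟩

lemma wordLength_C_pow_sq_le (m : ℕ) : wordLength (C ^ (m ^ 2)) ≤ 4 * m := by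
  let l := List.replicate m A ++ List.replicate m B ++ List.replicate m A⁻¹ ++
    List.replicate m B⁻¹
  have hl : ∀ s ∈ l, s ∈ S := by
    intro s hs
    simp only [l, List.mem_append, List.mem_replicate] at hs
    rcases hs with ((⟨-, rfl⟩ | ⟨-, rfl⟩) | ⟨-, rfl⟩) | ⟨-, rfl⟩ <;> simp [S]
  have h_prod : l.prod = C ^ (m ^ 2) := by
    simp only [l, List.prod_append, List.prod_replicate, inv_pow]
    exact commutator_A_pow_B_pow_eq_C_pow_sq m
  have h_len : l.length = 4 * m := by
    simp only [l, List.length_append, List.length_replicate]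
    ring
  simpa only [h_prod, h_len] using wordLength_list_prod_le hl

end Heis

theorem heisenberg_cocycle_invariant_part_vanishes_general
    (X : Type*) [NormedAddCommGroup X] [NormedSpace ℝ X]
    (π : Heis →* (X ≃ₗᵢ[ℝ] X))
    (f : Heis → X) (hcocycle : ∀ g h : Heis, f (g * h) = π g (f h) + f g)
    (hLip : ∃ L : ℝ, ∀ g h : Heis, ‖f g - f h‖ ≤ L * (Heis.dW g h : ℝ))
    (P : X → X)
    (hP : ∀ v : X,
      Filter.Tendsto (fun N : ℕ => (N : ℝ)⁻¹ • ∑ n ∈ Finset.range N, (π Heis.C ^ n) v)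
        Filter.atTop (nhds (P v))) :
    P (f Heis.C) = 0 := by
  have hf : IsCocycle π f := hcocycle
  obtain ⟨L, hL⟩ := hLip
  refine eq_zero_of_tendsto_average_of_norm_sq_le (K := 4 * |L|) (hP (f Heis.C)) fun m => ?_
  rw [← hf.map_pow]
  calc ‖f (Heis.C ^ (m ^ 2))‖ = ‖f 1 - f (Heis.C ^ (m ^ 2))‖ := by
        rw [hf.map_one, zero_sub, norm_neg]
    _ ≤ L * (Heis.wordLength (Heis.C ^ (m ^ 2)) : ℝ) := by simpa [Heis.dW] using hL 1 _
    _ ≤ |L| * (4 * m : ℕ) := by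
        gcongr
        · exact le_abs_self L
        · exact Heis.wordLength_C_pow_sq_le m
    _ = 4 * |L| * m := by push_cast; ring

/-- **Section 2 (analysis of `Pf`).** Let `X` be an ergodic Banach space, `π` an action of
`ℍ` on `X` by linear isometric automorphisms, `f : ℍ → X` a Lipschitz `1`-cocycle, and let
`P : X → X` be the projection onto the `π(c)`-invariant vectors,
`Pv = lim_N (1/N)·∑_{n<N} π(c)^n v`. Then `P(f(c)) = 0`. -/
theorem heisenberg_cocycle_invariant_part_vanishes
    (X : Type*) [NormedAddCommGroup X] [NormedSpace ℝ X] [CompleteSpace X]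
    (hX : IsErgodicSpace X)
    (π : Heis →* (X ≃ₗᵢ[ℝ] X))
    (f : Heis → X) (hcocycle : ∀ g h : Heis, f (g * h) = π g (f h) + f g)
    (hLip : ∃ L : ℝ, ∀ g h : Heis, ‖f g - f h‖ ≤ L * (Heis.dW g h : ℝ))
    (P : X → X)
    (hP : ∀ v : X,
      Filter.Tendsto (fun N : ℕ => (N : ℝ)⁻¹ • ∑ n ∈ Finset.range N, (π Heis.C ^ n) v)
        Filter.atTop (nhds (P v))) :
    P (f Heis.C) = 0 :=
  heisenberg_cocycle_invariant_part_vanishes_general X π f hcocycle hLip P hP
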